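/- If {γ_k}_{k≥0} is an order-d₁ multiplier sequence of type I and {λ_k}_{k≥0} is an order-d₂ multiplier sequence of type I, then the Hadamard product {γ_k λ_k}_{k≥0} is an order-min(d₁,d₂) multiplier sequence of type I. -/

import Mathlib

open Polynomial Finset

/-- A real polynomial has all real roots iff it splits over `ℝ`. -/
def RealRooted (p : Polynomial ℝ) : Prop := p.Splits

/-- The operator `Γ_λ` acting on polynomials by `x^k ↦ λ_k x^k`. -/
noncomputable def GammaOp (l : ℕ → ℝ) (p : Polynomial ℝ) : Polynomial ℝ :=
  ∑ k ∈ Finset.range (p.natDegree + 1), Polynomial.C (l k * p.coeff k) * Polynomial.X ^ k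

/-- `γ` is an order-`d` multiplier sequence of type I. -/
def IsOrderMultSeqI (d : ℕ) (γ : ℕ → ℝ) : Prop :=
  ∀ n : ℕ, ∀ p : Polynomial ℝ, p.natDegree ≤ d → RealRooted p →
    RealRooted (GammaOp (fun k => γ (k + n)) p)

@[simp]
lemma coeff_gammaOp (l : ℕ → ℝ) (p : ℝ[X]) (k : ℕ) :
    (GammaOp l p).coeff k = l k * p.coeff k := by
  simp only [GammaOp, finsetSum_coeff, coeff_C_mul, coeff_X_pow, mul_ite, mul_one, mul_zero,
    Finset.sum_ite_eq, Finset.mem_range]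
  split_ifs with hk
  · rfl
  · rw [p.coeff_eq_zero_of_natDegree_lt (by omega), mul_zero]

lemma natDegree_gammaOp_le (l : ℕ → ℝ) (p : ℝ[X]) :
    (GammaOp l p).natDegree ≤ p.natDegree := by
  rw [natDegree_le_iff_coeff_eq_zero]
  intro k hk
  rw [coeff_gammaOp, p.coeff_eq_zero_of_natDegree_lt hk, mul_zero]

lemma gammaOp_gammaOp (l m : ℕ → ℝ) (p : ℝ[X]) :
    GammaOp l (GammaOp m p) = GammaOp (fun k => m k * l k) p := by
  ext k
  simp only [coeff_gammaOp]
  ring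

theorem hadamard_orderMultSeqI (d₁ d₂ : ℕ) (γ lam : ℕ → ℝ)
    (h₁ : IsOrderMultSeqI d₁ γ) (h₂ : IsOrderMultSeqI d₂ lam) :
    IsOrderMultSeqI (min d₁ d₂) (fun k => γ k * lam k) := by
  intro n p hdeg hp
  have hγp : RealRooted (GammaOp (fun k => γ (k + n)) p) :=
    h₁ n p (hdeg.trans (min_le_left _ _)) hp
  have hdeg₂ : (GammaOp (fun k => γ (k + n)) p).natDegree ≤ d₂ :=
    (natDegree_gammaOp_le _ _).trans (hdeg.trans (min_le_right _ _))
  simpa only [gammaOp_gammaOp] using h₂ n _ hdeg₂ hγp
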